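/- arXiv:1307.3293 — 3 statements merged into one kernel-verified Lean document; each statement's English description precedes it below -/
import Mathlib

section
/- Every cycle with one chord is degree-choosable. Precisely: let G be the graph obtained from a cycle on m ≥ 4 vertices by adding a single edge (a chord) between two non-consecutive vertices of the cycle. For every list assignment L on G with |L(v)| ≥ deg_G(v) for every vertex v, the graph G has a proper L-coloring. -/
open SimpleGraph Finset
open Fin.CommRing

set_option linter.unusedSectionVars false



def pick (s : Finset ℕ) : ℕ := if h : s.Nonempty then s.min' h else 0

lemma pick_mem {s : Finset ℕ} (h : s.Nonempty) : pick s ∈ s := by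
  simp only [pick, dif_pos h]; exact s.min'_mem h

variable {V : Type*} [Fintype V] [DecidableEq V]

noncomputable def greedyF (G : SimpleGraph V) [DecidableRel G.Adj] (π : V → ℕ)
    (L : V → Finset ℕ) (v : V) : ℕ :=
  pick ((L v) \ ((Finset.univ.filter (fun u => G.Adj u v ∧ π u < π v)).attach.image
      (fun u => greedyF G π L u.1)))
termination_by π v
decreasing_by
  have := u.2
  simp only [Finset.mem_filter] at this
  exact this.2.2

lemma greedyF_eq (G : SimpleGraph V) [DecidableRel G.Adj] (π : V → ℕ)
    (L : V → Finset ℕ) (v : V) :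
    greedyF G π L v = pick ((L v) \
      ((Finset.univ.filter (fun u => G.Adj u v ∧ π u < π v)).attach.image
      (fun u => greedyF G π L u.1))) := by
  rw [greedyF]

lemma greedy (G : SimpleGraph V) [DecidableRel G.Adj] (π : V → ℕ)
    (hπ : ∀ x y, G.Adj x y → π x ≠ π y) (L : V → Finset ℕ)
    (h : ∀ v, ∃ S : Finset ℕ, ∃ T : Finset V,
      (∀ u, G.Adj u v → π u < π v → (L u).card = 1 → L u ⊆ S) ∧
      (∀ u, G.Adj u v → π u < π v → (L u).card ≠ 1 → u ∈ T) ∧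
      T.card < ((L v) \ S).card) :
    ∃ f : V → ℕ, (∀ v, f v ∈ L v) ∧ ∀ x y, G.Adj x y → f x ≠ f y := by
  set f := greedyF G π L with hf
  have key : ∀ n v, π v = n → f v ∈ (L v) \
      ((Finset.univ.filter (fun u => G.Adj u v ∧ π u < π v)).attach.image
      (fun u => f u.1)) := by
    intro n
    induction n using Nat.strong_induction_on with
    | _ n ih =>
      intro v hv
      rw [hf, greedyF_eq, ← hf]
      apply pick_mem
      obtain ⟨S, T, hS, hT, hcard⟩ := h v
      set E := Finset.univ.filter (fun u => G.Adj u v ∧ π u < π v) with hE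
      have hsub : ((L v) \ S) \ (T.image f) ⊆ (L v) \ (E.attach.image (fun u => f u.1)) := by
        intro x hx
        simp only [Finset.mem_sdiff, Finset.mem_image] at hx ⊢
        refine ⟨hx.1.1, ?_⟩
        rintro ⟨u, hu, rfl⟩
        obtain ⟨-, hadj, hlt⟩ := Finset.mem_filter.mp u.2
        have hfu : f u.1 ∈ L u.1 := by
          have := ih (π u.1) (hv ▸ hlt) u.1 rfl
          exact (Finset.mem_sdiff.mp this).1
        by_cases h1 : (L u.1).card = 1
        · exact hx.1.2 (hS u.1 hadj hlt h1 hfu)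
        · exact hx.2 ⟨u.1, hT u.1 hadj hlt h1, rfl⟩
      have hne : (((L v) \ S) \ (T.image f)).Nonempty := by
        rw [← Finset.card_pos]
        have h1 := Finset.le_card_sdiff (T.image f) ((L v) \ S)
        have h2 : (T.image f).card ≤ T.card := Finset.card_image_le
        omega
      obtain ⟨x, hx⟩ := hne
      exact ⟨x, hsub hx⟩
  refine ⟨f, fun v => (Finset.mem_sdiff.mp (key (π v) v rfl)).1, ?_⟩
  have main : ∀ x y, G.Adj x y → π x < π y → f x ≠ f y := by
    intro x y hadj hlt heq
    have hy := (Finset.mem_sdiff.mp (key (π y) y rfl)).2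
    apply hy
    rw [Finset.mem_image]
    have hxE : x ∈ Finset.univ.filter (fun u => G.Adj u y ∧ π u < π y) := by
      simp [hadj, hlt]
    exact ⟨⟨x, hxE⟩, Finset.mem_attach _ _, heq⟩
  intro x y hadj
  rcases lt_or_gt_of_ne (hπ x y hadj) with h | h
  · exact main x y hadj h
  · exact (main y x hadj.symm h).symm


lemma val_add_one' {m : ℕ} [NeZero m] (hm : 2 ≤ m) (x : Fin m) :
    (x + 1).val = if x.val = m - 1 then 0 else x.val + 1 := by
  have h1 : (1 : Fin m).val = 1 := by
    simp [Fin.val_one', Nat.mod_eq_of_lt (by omega : 1 < m)]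
  have heq : (x + 1).val = (x.val + 1) % m := by
    rw [Fin.add_def]; simp [h1]
  have hx := x.is_lt
  rw [heq]
  split_ifs with h
  · simp [h, Nat.sub_add_cancel (by omega : 1 ≤ m)]
  · exact Nat.mod_eq_of_lt (by omega)

lemma val_sub_one' {m : ℕ} [NeZero m] (hm : 2 ≤ m) (x : Fin m) :
    (x - 1).val = if x.val = 0 then m - 1 else x.val - 1 := by
  have h1 : (1 : Fin m).val = 1 := by
    simp [Fin.val_one', Nat.mod_eq_of_lt (by omega : 1 < m)]
  have heq : (x - 1).val = (m - 1 + x.val) % m := by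
    rw [Fin.sub_def]; simp [Nat.mod_eq_of_lt (by omega : 1 < m)]
  have hx := x.is_lt
  rw [heq]
  split_ifs with h
  · rw [h]; exact Nat.mod_eq_of_lt (by omega)
  · rw [Nat.mod_eq_sub_mod (by omega), Nat.mod_eq_of_lt (by omega)]
    omega

lemma sweep {m : ℕ} [NeZero m] (hm : 4 ≤ m) (i j : Fin m)
    (G : SimpleGraph (Fin m)) [DecidableRel G.Adj]
    (hAdj : ∀ x y, G.Adj x y ↔ (x = y + 1 ∨ x = y - 1 ∨ (x = i ∧ y = j) ∨ (x = j ∧ y = i)))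
    (ε : Fin m) (hε : ε = 1 ∨ ε = -1)
    (hjp : j ≠ i + ε) (hjm : j ≠ i - ε) (hji : j ≠ i)
    (L : Fin m → Finset ℕ)
    (h2 : ∀ v, 2 ≤ (L v).card) (h3 : 3 ≤ (L j).card)
    (c : ℕ) (hci : c ∈ L i) (hca : c ∉ L (i + ε)) :
    ∃ f : Fin m → ℕ, (∀ v, f v ∈ L v) ∧ ∀ x y, G.Adj x y → f x ≠ f y := by
  classical
  have hm2 : 2 ≤ m := by omega
  have hεε : ε * ε = 1 := by rcases hε with rfl | rfl <;> ring
  have hεne : ε ≠ 0 := by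
    rcases hε with rfl | rfl
    · intro h; have := congrArg Fin.val h
      simpa [Fin.val_one', Nat.mod_eq_of_lt (by omega : 1 < m)] using this
    · intro h
      have : (1 : Fin m) = 0 := by rw [← neg_neg (1 : Fin m), h, neg_zero]
      have := congrArg Fin.val this
      simpa [Fin.val_one', Nat.mod_eq_of_lt (by omega : 1 < m)] using this
  -- the list assignment with i forced to c
  set L' : Fin m → Finset ℕ := fun v => if v = i then {c} else L v with hL'
  -- ordering
  set π : Fin m → ℕ := fun v => ((i - v) * ε).val with hπdef
  have hπlt : ∀ v, π v < m := fun v => Fin.is_lt _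
  have hinj : ∀ u v : Fin m, π u = π v → u = v := by
    intro u v h
    have h1 : (i - u) * ε = (i - v) * ε := Fin.val_injective h
    have h2 := congrArg (· * ε) h1
    simp only [mul_assoc, hεε, mul_one] at h2
    exact sub_right_injective h2
  have hπi : π i = 0 := by simp [hπdef]
  have hπ0 : ∀ v, π v = 0 → v = i := by
    intro v hv; exact (hinj v i (by rw [hπi, hv])).symm ▸ rfl
  have hstep1 : ∀ v : Fin m, π (v + ε) = if π v = 0 then m - 1 else π v - 1 := by
    intro v
    have h' : (i - (v + ε)) * ε = (i - v) * ε - 1 := by linear_combination (-1 : Fin m) * hεε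
    show ((i - (v + ε)) * ε).val = _
    rw [h', val_sub_one' hm2]
  have hstep2 : ∀ v : Fin m, π (v - ε) = if π v = m - 1 then 0 else π v + 1 := by
    intro v
    have h' : (i - (v - ε)) * ε = (i - v) * ε + 1 := by linear_combination hεε
    show ((i - (v - ε)) * ε).val = _
    rw [h', val_add_one' hm2]
  have hπip : π (i + ε) = m - 1 := by rw [hstep1, if_pos hπi]
  have hπim : π (i - ε) = 1 := by rw [hstep2, hπi]; simp; omega
  -- card-1 lists are exactly at i
  have hcard1 : ∀ u, (L' u).card = 1 → u = i := by
    intro u hu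
    by_contra h
    rw [hL'] at hu
    simp only [if_neg h] at hu
    have := h2 u; omega
  have hL'i : L' i = {c} := by simp [hL']
  have hL'ne : ∀ v, v ≠ i → L' v = L v := by intro v h; simp [hL', h]
  have hAdjε : ∀ x y : Fin m, G.Adj x y ↔
      (x = y + ε ∨ x = y - ε ∨ (x = i ∧ y = j) ∨ (x = j ∧ y = i)) := by
    rcases hε with rfl | rfl
    · exact hAdj
    · intro x y
      rw [hAdj x y]
      have e1 : y + -(1:Fin m) = y - 1 := by ring
      have e2 : y - -(1:Fin m) = y + 1 := by ring
      rw [e1, e2]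
      tauto
  have hπe : 2 ≤ π j ∧ π j ≤ m - 2 := by
    have h0 : π j ≠ 0 := fun h => hji (hπ0 j h)
    have h1 : π j ≠ 1 := by
      intro h; exact hjm (hinj j (i - ε) (by rw [h, hπim]))
    have h2 : π j ≠ m - 1 := by
      intro h; exact hjp (hinj j (i + ε) (by rw [h, hπip]))
    have := hπlt j
    omega
  -- the greedy hypothesis
  have hyp : ∀ v, ∃ S : Finset ℕ, ∃ T : Finset (Fin m),
      (∀ u, G.Adj u v → π u < π v → (L' u).card = 1 → L' u ⊆ S) ∧
      (∀ u, G.Adj u v → π u < π v → (L' u).card ≠ 1 → u ∈ T) ∧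
      T.card < ((L' v) \ S).card := by
    intro v
    by_cases hvi : v = i
    · refine ⟨∅, ∅, ?_, ?_, ?_⟩
      · intro u _ hlt _; rw [hvi, hπi] at hlt; omega
      · intro u _ hlt _; rw [hvi, hπi] at hlt; omega
      · rw [hvi, hL'i]; simp
    have hvn : 1 ≤ π v ∧ π v ≤ m - 1 := by
      have := hπlt v
      have : π v ≠ 0 := fun h => hvi (hπ0 v h)
      have := hπlt v
      omega
    have hπvp : π (v + ε) = π v - 1 := by rw [hstep1, if_neg (by omega)]
    -- neighbors of v
    have hnb : ∀ u, G.Adj u v → (u = v + ε ∨ u = v - ε ∨ (u = i ∧ v = j)) := by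
      intro u hadj
      rw [hAdjε] at hadj
      rcases hadj with h | h | h | h
      · exact Or.inl h
      · exact Or.inr (Or.inl h)
      · exact Or.inr (Or.inr h)
      · exact absurd h.2 hvi
    -- generic list-card bound
    have hbnd : ∀ A : Finset ℕ, A.card - 1 ≤ (A \ {c}).card := by
      intro A
      have := Finset.le_card_sdiff ({c} : Finset ℕ) A
      simpa using this
    by_cases hv1 : π v = 1
    · -- v = i - ε
      refine ⟨{c}, ∅, fun u _ _ h => by rw [hcard1 u h, hL'i], ?_, ?_⟩
      · intro u hadj hlt hc
        rw [hv1] at hlt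
        have h0 : π u = 0 := by omega
        have hui := hπ0 u h0
        exact absurd (by rw [hui, hL'i]; simp : (L' u).card = 1) hc
      · rw [hL'ne v hvi]
        have := h2 v; have := hbnd (L v); simp only [Finset.card_empty]; omega
    by_cases hvm : π v = m - 1
    · -- v = i + ε
      have hvie : v = i + ε := hinj v (i + ε) (by rw [hvm, hπip])
      refine ⟨{c}, {v + ε}, fun u _ _ h => by rw [hcard1 u h, hL'i], ?_, ?_⟩
      · intro u hadj hlt hc
        rcases hnb u hadj with h | h | h
        · rw [h]; exact Finset.mem_singleton_self _
        · have hui : u = i := by rw [h, hvie]; ring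
          exact absurd (by rw [hui, hL'i]; simp : (L' u).card = 1) hc
        · exact absurd (by rw [h.1, hL'i]; simp : (L' u).card = 1) hc
      · rw [hL'ne v hvi]
        have hcv : c ∉ L v := by rw [hvie]; exact hca
        rw [Finset.sdiff_eq_self_of_disjoint (by simpa using hcv)]
        have := h2 v
        simp only [Finset.card_singleton]
        omega
    by_cases hvj : v = j
    · refine ⟨{c}, {v + ε}, fun u _ _ h => by rw [hcard1 u h, hL'i], ?_, ?_⟩
      · intro u hadj hlt hc
        rcases hnb u hadj with h | h | h
        · rw [h]; exact Finset.mem_singleton_self _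
        · exfalso
          rw [h, hstep2, if_neg (by omega)] at hlt
          omega
        · exact absurd (by rw [h.1, hL'i]; simp : (L' u).card = 1) hc
      · rw [hL'ne v hvi, hvj]
        have := h3; have := hbnd (L j); simp only [Finset.card_singleton]; omega
    · -- generic
      have hbound : 2 ≤ π v ∧ π v ≤ m - 2 := by omega
      refine ⟨∅, {v + ε}, ?_, ?_, ?_⟩
      · intro u hadj hlt hc
        exfalso
        have hui : u = i := hcard1 u hc
        rcases hnb u hadj with h | h | h
        · rw [h] at hui
          have : π (v + ε) = 0 := by rw [hui, hπi]
          rw [hπvp] at this; omega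
        · rw [h] at hui
          have : π (v - ε) = 0 := by rw [hui, hπi]
          rw [hstep2, if_neg (by omega)] at this; omega
        · exact hvj h.2
      · intro u hadj hlt hc
        rcases hnb u hadj with h | h | h
        · rw [h]; exact Finset.mem_singleton_self _
        · exfalso
          rw [h, hstep2, if_neg (by omega)] at hlt
          omega
        · exact absurd h.2 hvj
      · rw [hL'ne v hvi]
        have := h2 v
        simp only [Finset.sdiff_empty, Finset.card_singleton]
        omega
  obtain ⟨f, hf1, hf2⟩ := greedy G π (fun x y hadj h => hadj.ne (hinj x y h)) L' hyp
  refine ⟨f, fun v => ?_, hf2⟩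
  by_cases hv : v = i
  · have hmem := hf1 v
    rw [hv, hL'i, Finset.mem_singleton] at hmem
    rw [hv, hmem]; exact hci
  · have := hf1 v; rwa [hL'ne v hv] at this

lemma chordcase {m : ℕ} [NeZero m] (hm : 4 ≤ m) (i j : Fin m)
    (G : SimpleGraph (Fin m)) [DecidableRel G.Adj]
    (hAdj : ∀ x y, G.Adj x y ↔ (x = y + 1 ∨ x = y - 1 ∨ (x = i ∧ y = j) ∨ (x = j ∧ y = i)))
    (hjp : j ≠ i + 1) (hjm : j ≠ i - 1) (hji : j ≠ i)
    (L : Fin m → Finset ℕ)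
    (h2 : ∀ v, 2 ≤ (L v).card) (h3i : 3 ≤ (L i).card) (h3j : 3 ≤ (L j).card)
    (c : ℕ) (hca : c ∈ L (i + 1)) (hcb : c ∈ L (i - 1)) :
    ∃ f : Fin m → ℕ, (∀ v, f v ∈ L v) ∧ ∀ x y, G.Adj x y → f x ≠ f y := by
  classical
  have hm2 : 2 ≤ m := by omega
  set t : Fin m → ℕ := fun v => (v - i).val with htdef
  have htlt : ∀ v, t v < m := fun v => Fin.is_lt _
  have htinj : ∀ u v : Fin m, t u = t v → u = v := by
    intro u v h
    exact sub_left_injective (Fin.val_injective h)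
  have hti : t i = 0 := by simp [htdef]
  have htp : ∀ v : Fin m, t (v + 1) = if t v = m - 1 then 0 else t v + 1 := by
    intro v
    have h' : (v + 1) - i = (v - i) + 1 := by ring
    show ((v + 1) - i).val = _
    rw [h', val_add_one' hm2]
  have htm : ∀ v : Fin m, t (v - 1) = if t v = 0 then m - 1 else t v - 1 := by
    intro v
    have h' : (v - 1) - i = (v - i) - 1 := by ring
    show ((v - 1) - i).val = _
    rw [h', val_sub_one' hm2]
  have htip : t (i + 1) = 1 := by rw [htp, hti, if_neg (by omega)]
  have htim : t (i - 1) = m - 1 := by rw [htm, hti, if_pos rfl]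
  set d : ℕ := t j with hddef
  have hd : 2 ≤ d ∧ d ≤ m - 2 := by
    have h0 : d ≠ 0 := fun h => hji (htinj j i (by rw [hti, ← h]))
    have h1 : d ≠ 1 := fun h => hjp (htinj j (i + 1) (by rw [htip, ← h]))
    have hm1 : d ≠ m - 1 := fun h => hjm (htinj j (i - 1) (by rw [htim, ← h]))
    have := htlt j
    omega
  -- characterizations
  have hchi : ∀ v, t v = 0 → v = i := fun v h => htinj v i (by rw [hti, h])
  have hchp : ∀ v, t v = 1 → v = i + 1 := fun v h => htinj v (i + 1) (by rw [htip, h])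
  have hchm : ∀ v, t v = m - 1 → v = i - 1 := fun v h => htinj v (i - 1) (by rw [htim, h])
  have hchj : ∀ v, t v = d → v = j := fun v h => htinj v j (by rw [← hddef, h])
  -- ordering
  set π : Fin m → ℕ := fun v =>
    if t v = 0 then m - 1 else if t v = d then m - 2 else
    if t v < d then t v - 1 else d - 1 + (m - 1 - t v) with hπdef
  have hgval : ∀ v, π v = if t v = 0 then m - 1 else if t v = d then m - 2 else
      if t v < d then t v - 1 else d - 1 + (m - 1 - t v) := fun v => rfl
  have hπinj : ∀ x y : Fin m, G.Adj x y → π x ≠ π y := by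
    intro x y hadj
    have hne : t x ≠ t y := fun h => hadj.ne (htinj x y h)
    have h1 := htlt x
    have h2 := htlt y
    rw [hgval, hgval]
    split_ifs <;> omega
  -- modified lists
  set L' : Fin m → Finset ℕ := fun v => if v = i + 1 ∨ v = i - 1 then {c} else L v with hL'
  have hab : (i + 1 : Fin m) ≠ i - 1 := by
    intro h
    have := congrArg t h
    rw [htip, htim] at this
    omega
  have hL'a : L' (i + 1) = {c} := by simp [hL']
  have hL'b : L' (i - 1) = {c} := by simp [hL']
  have hL'ne : ∀ v, v ≠ i + 1 → v ≠ i - 1 → L' v = L v := by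
    intro v h1 h2; simp [hL', h1, h2]
  have hcard1 : ∀ u, (L' u).card = 1 → L' u = {c} := by
    intro u hu
    by_cases h : u = i + 1 ∨ u = i - 1
    · simp [hL', h]
    · push_neg at h
      rw [hL'ne u h.1 h.2] at hu ⊢
      have := h2 u; omega
  have hsing : ∀ u, (L' u).card = 1 → t u = 1 ∨ t u = m - 1 := by
    intro u hu
    by_cases h : u = i + 1 ∨ u = i - 1
    · rcases h with rfl | rfl
      · exact Or.inl htip
      · exact Or.inr htim
    · push_neg at h
      rw [hL'ne u h.1 h.2] at hu
      have := h2 u; omega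
  have hnsing : ∀ u, t u ≠ 1 → t u ≠ m - 1 → L' u = L u := by
    intro u h1 h2
    exact hL'ne u (fun h => h1 (h ▸ htip)) (fun h => h2 (h ▸ htim))
  have hbnd : ∀ A : Finset ℕ, A.card - 1 ≤ (A \ {c}).card := by
    intro A
    have := Finset.le_card_sdiff ({c} : Finset ℕ) A
    simpa using this
  -- hypothesis of greedy
  have hyp : ∀ v, ∃ S : Finset ℕ, ∃ T : Finset (Fin m),
      (∀ u, G.Adj u v → π u < π v → (L' u).card = 1 → L' u ⊆ S) ∧
      (∀ u, G.Adj u v → π u < π v → (L' u).card ≠ 1 → u ∈ T) ∧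
      T.card < ((L' v) \ S).card := by
    intro v
    have htv := htlt v
    -- neighbor analysis
    have hnb : ∀ u, G.Adj u v → u = v + 1 ∨ u = v - 1 ∨ (u = i ∧ v = j) ∨ (u = j ∧ v = i) :=
      fun u h => (hAdj u v).mp h
    have htvp : t (v + 1) = if t v = m - 1 then 0 else t v + 1 := htp v
    have htvm : t (v - 1) = if t v = 0 then m - 1 else t v - 1 := htm v
    have hπj : ∀ w, w = j → π w = m - 2 := by
      intro w hw
      subst hw
      have := hgval w
      rw [← hddef] at this
      split_ifs at this <;> omega
    have hπi2 : ∀ w, w = i → π w = m - 1 := by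
      intro w hw
      subst hw
      have := hgval w
      rw [hti] at this
      split_ifs at this <;> omega
    by_cases ht0 : t v = 0
    · -- v = i : S = {c}, T = {j}
      refine ⟨{c}, {j}, fun u _ _ h => by rw [hcard1 u h], ?_, ?_⟩
      · intro u hadj hlt hc
        rcases hnb u hadj with h | h | h | h
        · have htu : t u = if t v = m - 1 then 0 else t v + 1 := by rw [h]; exact htvp
          rw [if_neg (by omega), ht0] at htu
          exact absurd (by rw [hchp u htu, hL'a]; simp : (L' u).card = 1) hc
        · have htu : t u = if t v = 0 then m - 1 else t v - 1 := by rw [h]; exact htvm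
          rw [if_pos ht0] at htu
          exact absurd (by rw [hchm u htu, hL'b]; simp : (L' u).card = 1) hc
        · exfalso
          have : t v = d := by rw [h.2, hddef]
          omega
        · rw [h.1]; exact Finset.mem_singleton_self _
      · have hvi : v = i := hchi v ht0
        rw [hnsing v (by omega) (by omega), hvi]
        have := hbnd (L i)
        simp only [Finset.card_singleton]
        omega
    by_cases ht1 : t v = 1
    · -- v = i + 1 : first vertex, no earlier neighbors
      have hπv : π v = 0 := by
        rw [hgval v, ht1, if_neg (by omega : ¬(1:ℕ) = 0), if_neg (by omega), if_pos (by omega)]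
      refine ⟨∅, ∅, ?_, ?_, ?_⟩
      · intro u _ hlt _; rw [hπv] at hlt; omega
      · intro u _ hlt _; rw [hπv] at hlt; omega
      · rw [hchp v ht1, hL'a]; simp
    by_cases htm1 : t v = m - 1
    · -- v = i - 1 : no earlier neighbors
      have hπv : π v = d - 1 := by
        have := hgval v; rw [htm1] at this; split_ifs at this <;> omega
      refine ⟨∅, ∅, ?_, ?_, ?_⟩
      · intro u hadj hlt _
        exfalso
        rcases hnb u hadj with h | h | h | h
        · have htu : t u = if t v = m - 1 then 0 else t v + 1 := by rw [h]; exact htvp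
          have e1 := hgval u
          split_ifs at htu e1 <;> omega
        · have htu : t u = if t v = 0 then m - 1 else t v - 1 := by rw [h]; exact htvm
          have e1 := hgval u
          split_ifs at htu e1 <;> omega
        · have : t v = d := by rw [h.2, hddef]
          omega
        · have : t v = 0 := by rw [h.2, hti]
          omega
      · intro u hadj hlt _
        exfalso
        rcases hnb u hadj with h | h | h | h
        · have htu : t u = if t v = m - 1 then 0 else t v + 1 := by rw [h]; exact htvp
          have e1 := hgval u
          split_ifs at htu e1 <;> omega
        · have htu : t u = if t v = 0 then m - 1 else t v - 1 := by rw [h]; exact htvm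
          have e1 := hgval u
          split_ifs at htu e1 <;> omega
        · have : t v = d := by rw [h.2, hddef]
          omega
        · have : t v = 0 := by rw [h.2, hti]
          omega
      · rw [hchm v htm1, hL'b]; simp
    by_cases htd : t v = d
    · -- v = j
      have hvj : v = j := hchj v htd
      have hπv : π v = m - 2 := hπj v hvj
      have hne2 : (v - 1 : Fin m) ≠ v + 1 := by
        intro h
        have := congrArg t h
        rw [htvm, htvp] at this
        split_ifs at this <;> omega
      -- analysis of earlier neighbors of j
      have hnbj : ∀ u, G.Adj u v → π u < π v → u = v - 1 ∨ u = v + 1 := by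
        intro u hadj hlt
        rcases hnb u hadj with h | h | h | h
        · exact Or.inr h
        · exact Or.inl h
        · exfalso; rw [hπi2 u h.1, hπv] at hlt; omega
        · exfalso
          have : t v = 0 := by rw [h.2, hti]
          omega
      have htvm' : t (v - 1) = d - 1 := by rw [htvm, if_neg (by omega)]; omega
      have htvp' : t (v + 1) = d + 1 := by rw [htvp, if_neg (by omega)]; omega
      by_cases hd2 : d = 2
      · by_cases hdm : d = m - 2
        · -- m = 4 : both neighbors are singletons
          refine ⟨{c}, ∅, fun u _ _ h => by rw [hcard1 u h], ?_, ?_⟩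
          · intro u hadj hlt hc
            exfalso
            rcases hnbj u hadj hlt with h | h
            · exact hc (by rw [h, hchp _ (by omega : t (v-1) = 1), hL'a]; simp)
            · exact hc (by rw [h, hchm _ (by omega : t (v+1) = m-1), hL'b]; simp)
          · rw [hnsing v (by omega) (by omega), hvj]
            have := hbnd (L j)
            simp only [Finset.card_empty]
            omega
        · -- d = 2 < m - 2 : only v - 1 is a singleton
          refine ⟨{c}, {v + 1}, fun u _ _ h => by rw [hcard1 u h], ?_, ?_⟩
          · intro u hadj hlt hc
            rcases hnbj u hadj hlt with h | h
            · exact absurd (by rw [h, hchp _ (by omega : t (v-1) = 1), hL'a]; simp :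
                (L' u).card = 1) hc
            · rw [h]; exact Finset.mem_singleton_self _
          · rw [hnsing v (by omega) (by omega), hvj]
            have := hbnd (L j)
            simp only [Finset.card_singleton]
            omega
      · by_cases hdm : d = m - 2
        · -- d = m - 2 > 2 : only v + 1 is a singleton
          refine ⟨{c}, {v - 1}, fun u _ _ h => by rw [hcard1 u h], ?_, ?_⟩
          · intro u hadj hlt hc
            rcases hnbj u hadj hlt with h | h
            · rw [h]; exact Finset.mem_singleton_self _
            · exact absurd (by rw [h, hchm _ (by omega : t (v+1) = m-1), hL'b]; simp :
                (L' u).card = 1) hc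
          · rw [hnsing v (by omega) (by omega), hvj]
            have := hbnd (L j)
            simp only [Finset.card_singleton]
            omega
        · -- 2 < d < m - 2 : no singleton neighbors
          refine ⟨∅, {v - 1, v + 1}, ?_, ?_, ?_⟩
          · intro u hadj hlt hc
            exfalso
            have hs := hsing u hc
            rcases hnbj u hadj hlt with h | h
            · rw [h, htvm'] at hs; omega
            · rw [h, htvp'] at hs; omega
          · intro u hadj hlt _
            rcases hnbj u hadj hlt with h | h
            · rw [h]; simp
            · rw [h]; simp
          · rw [Finset.card_pair hne2, hnsing v (by omega) (by omega), hvj]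
            simp only [Finset.sdiff_empty]
            omega
    -- now v is an interior arc vertex : t v ∈ [2, d-1] ∪ [d+1, m-2]
    by_cases harc : t v < d
    · -- arc 1 interior : 2 ≤ t v ≤ d - 1, earlier nbr is v - 1
      have hπv : π v = t v - 1 := by
        have := hgval v; split_ifs at this <;> omega
      have hnotp : ∀ u, u = v + 1 → ¬ π u < π v := by
        intro u h
        have htu : t u = if t v = m - 1 then 0 else t v + 1 := by rw [h]; exact htvp
        have e1 := hgval u
        split_ifs at htu e1 <;> omega
      have hnbv : ∀ u, G.Adj u v → π u < π v → u = v - 1 := by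
        intro u hadj hlt
        rcases hnb u hadj with h | h | h | h
        · exact absurd hlt (hnotp u h)
        · exact h
        · exfalso; have : t v = d := by rw [h.2, hddef]
          omega
        · exfalso; have : t v = 0 := by rw [h.2, hti]
          omega
      have htvm' : t (v - 1) = t v - 1 := by rw [htvm, if_neg (by omega)]
      by_cases ht2 : t v = 2
      · -- earlier neighbor is i + 1, a singleton
        refine ⟨{c}, ∅, fun u _ _ h => by rw [hcard1 u h], ?_, ?_⟩
        · intro u hadj hlt hc
          exfalso
          have h := hnbv u hadj hlt
          exact hc (by rw [h, hchp _ (by omega : t (v-1) = 1), hL'a]; simp)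
        · rw [hnsing v (by omega) (by omega)]
          have := hbnd (L v)
          have := h2 v
          simp only [Finset.card_empty]
          omega
      · refine ⟨∅, {v - 1}, ?_, ?_, ?_⟩
        · intro u hadj hlt hc
          exfalso
          have hs := hsing u hc
          have h := hnbv u hadj hlt
          rw [h, htvm'] at hs
          omega
        · intro u hadj hlt _
          rw [hnbv u hadj hlt]; exact Finset.mem_singleton_self _
        · rw [hnsing v (by omega) (by omega)]
          have := h2 v
          simp only [Finset.sdiff_empty, Finset.card_singleton]
          omega
    · -- arc 2 interior : d + 1 ≤ t v ≤ m - 2, earlier nbr is v + 1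
      have hbounds : d < t v ∧ t v ≤ m - 2 := by
        have := htlt v
        omega
      have hπv : π v = d - 1 + (m - 1 - t v) := by
        have := hgval v; split_ifs at this <;> omega
      have hnotm : ∀ u, u = v - 1 → ¬ π u < π v := by
        intro u h
        have htu : t u = if t v = 0 then m - 1 else t v - 1 := by rw [h]; exact htvm
        have e1 := hgval u
        split_ifs at htu e1 <;> omega
      have hnbv : ∀ u, G.Adj u v → π u < π v → u = v + 1 := by
        intro u hadj hlt
        rcases hnb u hadj with h | h | h | h
        · exact h
        · exact absurd hlt (hnotm u h)
        · exfalso; have : t v = d := by rw [h.2, hddef]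
          omega
        · exfalso; have : t v = 0 := by rw [h.2, hti]
          omega
      have htvp' : t (v + 1) = t v + 1 := by rw [htvp, if_neg (by omega)]
      by_cases htm2 : t v = m - 2
      · -- earlier neighbor is i - 1, a singleton
        refine ⟨{c}, ∅, fun u _ _ h => by rw [hcard1 u h], ?_, ?_⟩
        · intro u hadj hlt hc
          exfalso
          have h := hnbv u hadj hlt
          exact hc (by rw [h, hchm _ (by omega : t (v+1) = m-1), hL'b]; simp)
        · rw [hnsing v (by omega) (by omega)]
          have := hbnd (L v)
          have := h2 v
          simp only [Finset.card_empty]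
          omega
      · refine ⟨∅, {v + 1}, ?_, ?_, ?_⟩
        · intro u hadj hlt hc
          exfalso
          have hs := hsing u hc
          have h := hnbv u hadj hlt
          rw [h, htvp'] at hs
          omega
        · intro u hadj hlt _
          rw [hnbv u hadj hlt]; exact Finset.mem_singleton_self _
        · rw [hnsing v (by omega) (by omega)]
          have := h2 v
          simp only [Finset.sdiff_empty, Finset.card_singleton]
          omega
  obtain ⟨f, hf1, hf2⟩ := greedy G π hπinj L' hyp
  refine ⟨f, fun v => ?_, hf2⟩
  by_cases h : v = i + 1 ∨ v = i - 1
  · have hmem := hf1 v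
    rcases h with rfl | rfl
    · rw [hL'a, Finset.mem_singleton] at hmem
      rw [hmem]; exact hca
    · rw [hL'b, Finset.mem_singleton] at hmem
      rw [hmem]; exact hcb
  · push_neg at h
    have := hf1 v
    rwa [hL'ne v h.1 h.2] at this

/-- Every cycle with one chord is degree-choosable: if `G` is obtained from
the cycle on `m ≥ 4` vertices by adding one edge between two distinct, non-consecutive
vertices `i, j` of the cycle, then for every list assignment `L` with `|L v| ≥ deg_G(v)`
for all `v`, the graph `G` has a proper `L`-coloring. -/
theorem chorded_cycle_degree_choosable (m : ℕ) (hm : 4 ≤ m) (i j : Fin m)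
    (hne : i ≠ j) (hnonconsec : ¬ (cycleGraph m).Adj i j)
    (G : SimpleGraph (Fin m)) [DecidableRel G.Adj]
    (hG : G = cycleGraph m ⊔ fromEdgeSet {s(i, j)})
    (L : Fin m → Finset ℕ) (hL : ∀ v, G.degree v ≤ (L v).card) :
    ∃ f : Fin m → ℕ, (∀ v, f v ∈ L v) ∧ ∀ x y, G.Adj x y → f x ≠ f y := by
  classical
  have : NeZero m := ⟨by omega⟩
  have hm2 : 2 ≤ m := by omega
  have h1v : (1 : Fin m).val = 1 := by
    simp [Fin.val_one', Nat.mod_eq_of_lt (by omega : 1 < m)]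
  have hsub1 : ∀ x y : Fin m, (x - y).val = 1 ↔ x = y + 1 := by
    intro x y
    constructor
    · intro h
      have : x - y = 1 := Fin.val_injective (by rw [h, h1v])
      rw [← this]; ring
    · intro h
      rw [h]
      have : y + 1 - y = 1 := by ring
      rw [this, h1v]
  have hAdj : ∀ x y : Fin m, G.Adj x y ↔
      (x = y + 1 ∨ x = y - 1 ∨ (x = i ∧ y = j) ∨ (x = j ∧ y = i)) := by
    intro x y
    rw [hG]
    simp only [sup_adj, fromEdgeSet_adj, Set.mem_singleton_iff, Sym2.eq_iff]
    rw [cycleGraph_adj']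
    constructor
    · rintro (⟨h | h⟩ | ⟨h | h, hxy⟩)
      · exact Or.inl ((hsub1 x y).mp h)
      · refine Or.inr (Or.inl ?_)
        have := (hsub1 y x).mp h
        rw [this]; ring
      · exact Or.inr (Or.inr (Or.inl h))
      · exact Or.inr (Or.inr (Or.inr h))
    · rintro (h | h | h | h)
      · exact Or.inl (Or.inl ((hsub1 x y).mpr h))
      · refine Or.inl (Or.inr ((hsub1 y x).mpr ?_))
        rw [h]; ring
      · exact Or.inr ⟨Or.inl h, h.1 ▸ h.2 ▸ hne⟩
      · exact Or.inr ⟨Or.inr h, h.1 ▸ h.2 ▸ hne.symm⟩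
  -- basic distinctness facts
  have hvadd : ∀ v : Fin m, (v + 1).val = if v.val = m - 1 then 0 else v.val + 1 :=
    val_add_one' hm2
  have hvsub : ∀ v : Fin m, (v - 1).val = if v.val = 0 then m - 1 else v.val - 1 :=
    val_sub_one' hm2
  have hpm : ∀ v : Fin m, v - 1 ≠ v + 1 := by
    intro v h
    have h2 := congrArg Fin.val h
    rw [hvadd, hvsub] at h2
    have := v.is_lt
    split_ifs at h2 <;> omega
  have hvp : ∀ v : Fin m, v ≠ v + 1 := by
    intro v h
    have h2 := congrArg Fin.val h
    rw [hvadd] at h2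
    have := v.is_lt
    split_ifs at h2 <;> omega
  have hvm : ∀ v : Fin m, v ≠ v - 1 := by
    intro v h
    have h2 := congrArg Fin.val h
    rw [hvsub] at h2
    have := v.is_lt
    split_ifs at h2 <;> omega
  have hjp : j ≠ i + 1 := by
    intro h
    apply hnonconsec
    rw [cycleGraph_adj']
    right
    rw [hsub1]
    exact h
  have hjm : j ≠ i - 1 := by
    intro h
    apply hnonconsec
    rw [cycleGraph_adj']
    left
    rw [hsub1]
    rw [h]; ring
  -- degree bounds
  have hdeg2 : ∀ v, 2 ≤ (L v).card := by
    intro v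
    refine le_trans ?_ (hL v)
    have hsub : ({v - 1, v + 1} : Finset (Fin m)) ⊆ G.neighborFinset v := by
      intro u hu
      rw [mem_neighborFinset]
      simp only [Finset.mem_insert, Finset.mem_singleton] at hu
      rw [G.adj_comm, hAdj]
      rcases hu with rfl | rfl
      · right; left; rfl
      · left; rfl
    calc 2 = ({v - 1, v + 1} : Finset (Fin m)).card := (Finset.card_pair (hpm v)).symm
    _ ≤ (G.neighborFinset v).card := Finset.card_le_card hsub
    _ = G.degree v := rfl
  have hdeg3 : ∀ v w : Fin m, w ≠ v - 1 → w ≠ v + 1 → G.Adj v w → 3 ≤ (L v).card := by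
    intro v w hw1 hw2 hadj
    refine le_trans ?_ (hL v)
    have hsub : ({v - 1, v + 1, w} : Finset (Fin m)) ⊆ G.neighborFinset v := by
      intro u hu
      rw [mem_neighborFinset]
      simp only [Finset.mem_insert, Finset.mem_singleton] at hu
      rcases hu with rfl | rfl | rfl
      · rw [G.adj_comm, hAdj]; right; left; rfl
      · rw [G.adj_comm, hAdj]; left; rfl
      · exact hadj
    have hcard : ({v - 1, v + 1, w} : Finset (Fin m)).card = 3 := by
      rw [Finset.card_insert_of_notMem (by simp [hpm v, hw1.symm]),
        Finset.card_insert_of_notMem (by simp [hw2.symm]), Finset.card_singleton]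
    calc 3 = ({v - 1, v + 1, w} : Finset (Fin m)).card := hcard.symm
    _ ≤ (G.neighborFinset v).card := Finset.card_le_card hsub
    _ = G.degree v := rfl
  have hadjij : G.Adj i j := by rw [hAdj]; right; right; left; exact ⟨rfl, rfl⟩
  have h3i : 3 ≤ (L i).card := hdeg3 i j hjm hjp hadjij
  have h3j : 3 ≤ (L j).card :=
    hdeg3 j i (fun h => hjp (by rw [h]; ring)) (fun h => hjm (by rw [h]; ring)) hadjij.symm
  -- case split
  by_cases hcc : ∃ c, c ∈ L (i + 1) ∧ c ∈ L (i - 1)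
  · obtain ⟨c, hca, hcb⟩ := hcc
    exact chordcase hm i j G hAdj hjp hjm hne.symm L hdeg2 h3i h3j c hca hcb
  · push_neg at hcc
    obtain ⟨c, hci⟩ := Finset.card_pos.mp (by omega : 0 < (L i).card)
    by_cases hcp : c ∈ L (i + 1)
    · -- c ∉ L (i - 1) : sweep with ε = -1
      have hcm : c ∉ L (i - 1) := fun h => hcc c hcp h
      have e1 : i + (-1 : Fin m) = i - 1 := by ring
      have e2 : i - (-1 : Fin m) = i + 1 := by ring
      exact sweep hm i j G hAdj (-1) (Or.inr rfl) (e1 ▸ hjm) (e2 ▸ hjp) hne.symm L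
        hdeg2 h3j c hci (e1 ▸ hcm)
    · -- sweep with ε = 1
      exact sweep hm i j G hAdj 1 (Or.inl rfl) hjp hjm hne.symm L hdeg2 h3j c hci hcp
end

section
/- Let G be a finite simple graph and L a list assignment on G with |L(v)| ≥ 4 for every vertex v. Suppose S is a set of vertices of G such that every vertex of S has degree exactly 4 in G, and the induced subgraph G[S] is a cycle of even length. If the induced subgraph of G on V(G) \ S has a proper L-coloring, then G has a proper L-coloring. -/
/-!
Every vertex of the cycle `G[S]` has two neighbours on the cycle, hence at most two outside `S`;
deleting the colours of those neighbours leaves lists of size at least two on `G[S]`, so it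
suffices that even cycles are 2-choosable. Trim every list to exactly two colours. If all lists
agree, colour by the bipartition. Otherwise some `ℓ (k + 1)` contains a colour `c ∉ ℓ k`: give
`k + 1` the colour `c` and colour greedily once around the cycle; the last vertex `k` avoids its
predecessor by choice and `c` because `c ∉ ℓ k`.
-/

open SimpleGraph Finset

namespace SimpleGraph

variable {V W α : Type*}

def IsListColoring (G : SimpleGraph V) (L : V → Finset α) (f : V → α) : Prop :=
  (∀ v, f v ∈ L v) ∧ ∀ x y, G.Adj x y → f x ≠ f y

theorem IsListColoring.mono {G : SimpleGraph V} {L L' : V → Finset α} {f : V → α}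
    (hf : G.IsListColoring L f) (hL : ∀ v, L v ⊆ L' v) : G.IsListColoring L' f :=
  ⟨fun v => hL v (hf.1 v), hf.2⟩

theorem IsListColoring.map_iso {G : SimpleGraph V} {H : SimpleGraph W} (φ : G ≃g H)
    {L : W → Finset α} {f : V → α} (hf : G.IsListColoring (L ∘ φ) f) :
    H.IsListColoring L (f ∘ φ.symm) := by
  refine ⟨fun w => by simpa using hf.1 (φ.symm w), fun x y hxy => hf.2 _ _ ?_⟩
  exact φ.symm.map_adj_iff.mpr hxy

theorem exists_isListColoring_of_forall_card_eq_two {G : SimpleGraph V} {L : V → Finset α}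
    (hL : ∀ v, 2 ≤ #(L v))
    (h : ∀ L' : V → Finset α, (∀ v, #(L' v) = 2) → (∀ v, L' v ⊆ L v) →
      ∃ f, G.IsListColoring L' f) :
    ∃ f, G.IsListColoring L f := by
  choose L' hsub hcard using fun v => exists_subset_card_eq (hL v)
  obtain ⟨f, hf⟩ := h L' hcard hsub
  exact ⟨f, hf.mono hsub⟩

section Cycle

variable {n : ℕ}

theorem ne_of_cycleGraph_adj {β : Type*} {g : Fin (n + 1) → β} (hg : ∀ i, g (i + 1) ≠ g i)
    {i j : Fin (n + 1)} (h : (cycleGraph (n + 1)).Adj i j) : g i ≠ g j := by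
  rw [cycleGraph_eq_circulantGraph, circulantGraph_adj, Set.mem_singleton_iff,
    Set.mem_singleton_iff, sub_eq_iff_eq_add', sub_eq_iff_eq_add'] at h
  obtain ⟨-, rfl | rfl⟩ := h
  · exact hg j
  · exact (hg i).symm

def cycleGraphAddRight (t : Fin (n + 1)) : cycleGraph (n + 1) ≃g cycleGraph (n + 1) where
  toEquiv := Equiv.addRight t
  map_rel_iff' := by simp [cycleGraph_eq_circulantGraph]

theorem cycleGraph_degree_eq_two (hn : 3 ≤ n) (v : Fin n) : (cycleGraph n).degree v = 2 := by
  obtain ⟨k, rfl⟩ := Nat.exists_eq_add_of_le' hn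
  exact cycleGraph_degree_three_le

theorem exists_isListColoring_cycleGraph_const (hn : Even n) {s : Finset α} (hs : 2 ≤ #s) :
    ∃ g, (cycleGraph n).IsListColoring (fun _ => s) g := by
  obtain ⟨a, ha, b, hb, hab⟩ := one_lt_card.mp hs
  let c := cycleGraph.bicoloring_of_even n hn
  refine ⟨fun i => if c i then a else b, fun i => by dsimp only; split <;> assumption,
    fun i j hij => ?_⟩
  have hc := c.valid hij
  dsimp only
  generalize c i = x at hc ⊢
  generalize c j = y at hc ⊢
  cases x <;> cases y <;> first | exact absurd rfl hc | exact hab | exact hab.symm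

variable [DecidableEq α]

theorem exists_isListColoring_cycleGraph_of_mem_zero_of_notMem_last
    {ℓ : Fin (n + 1) → Finset α} (hℓ : ∀ i, 2 ≤ #(ℓ i)) {c : α} (hc : c ∈ ℓ 0)
    (hc' : c ∉ ℓ (Fin.last n)) : ∃ g, (cycleGraph (n + 1)).IsListColoring ℓ g := by
  choose next hnext using fun i a =>
    (one_lt_card_iff_nontrivial.mp (hℓ i)).erase_nonempty (a := a)
  let g : Fin (n + 1) → α := Fin.induction c fun i a => next i.succ a
  have hg_succ (i : Fin n) : g i.succ = next i.succ (g i.castSucc) := Fin.induction_succ ..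
  have hmem : ∀ i, g i ∈ ℓ i := Fin.cases hc fun i => by
    rw [hg_succ]; exact mem_of_mem_erase (hnext _ _)
  refine ⟨g, hmem, fun i j => ne_of_cycleGraph_adj fun i => ?_⟩
  induction i using Fin.lastCases with
  | last =>
    rw [Fin.last_add_one]
    exact fun h => hc' (h ▸ hmem (Fin.last n) :)
  | cast i => rw [Fin.coeSucc_eq_succ, hg_succ]; exact ne_of_mem_erase (hnext _ _)

theorem exists_isListColoring_cycleGraph_of_not_subset
    {ℓ : Fin (n + 1) → Finset α} (hℓ : ∀ i, 2 ≤ #(ℓ i)) {k : Fin (n + 1)}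
    (hk : ¬ ℓ (k + 1) ⊆ ℓ k) : ∃ g, (cycleGraph (n + 1)).IsListColoring ℓ g := by
  obtain ⟨c, hc, hc'⟩ := not_subset.mp hk
  let φ := cycleGraphAddRight (k + 1)
  obtain ⟨g, hg⟩ := exists_isListColoring_cycleGraph_of_mem_zero_of_notMem_last
    (ℓ := ℓ ∘ φ) (fun i => hℓ _) (c := c) (by simpa [φ, cycleGraphAddRight] using hc)
    (by
      show c ∉ ℓ (Fin.last n + (k + 1))
      rwa [add_left_comm, Fin.last_add_one, add_zero])
  exact ⟨_, hg.map_iso φ⟩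

theorem exists_isListColoring_cycleGraph_of_even (hn : Even n) {ℓ : Fin n → Finset α}
    (hℓ : ∀ i, 2 ≤ #(ℓ i)) : ∃ g, (cycleGraph n).IsListColoring ℓ g := by
  refine exists_isListColoring_of_forall_card_eq_two hℓ fun ℓ hcard _ => ?_
  cases n with
  | zero => exact ⟨Fin.elim0, fun v => v.elim0, fun x => x.elim0⟩
  | succ n =>
    by_cases hconst : ∀ i, ℓ (i + 1) = ℓ i
    · have : ℓ = fun _ => ℓ 0 :=
        funext <| Fin.induction rfl fun i hi => by rw [← Fin.coeSucc_eq_succ, hconst, hi]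
      rw [this]
      exact exists_isListColoring_cycleGraph_const hn (hcard 0).ge
    · push Not at hconst
      obtain ⟨k, hk⟩ := hconst
      exact exists_isListColoring_cycleGraph_of_not_subset (fun i => (hcard i).ge)
        fun h => hk (eq_of_subset_of_card_le h (by rw [hcard, hcard]))

end Cycle

section Extension

variable [Fintype V] {G : SimpleGraph V} [DecidableRel G.Adj] {S : Set V} [DecidablePred (· ∈ S)]

theorem card_subtype_neighborFinset_compl_add_degree_induce (v : S) :
    #((G.neighborFinset v).subtype (· ∈ Sᶜ)) + (G.induce S).degree v = G.degree v := by
  classical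
  rw [card_subtype, ← card_neighborFinset_eq_degree, ← card_neighborFinset_eq_degree,
    ← card_map (.subtype (· ∈ S)) (s := (G.induce S).neighborFinset v),
    map_neighborFinset_induce, ← filter_mem_eq_inter, add_comm]
  simpa using card_filter_add_card_filter_not (s := G.neighborFinset v) (· ∈ S)

theorem IsListColoring.extend [DecidableEq α] {L : V → Finset α} {f : ↥Sᶜ → α}
    (hf : (G.induce Sᶜ).IsListColoring (fun v => L v) f) {g : S → α}
    (hg : (G.induce S).IsListColoring
      (fun v => L v \ ((G.neighborFinset v).subtype (· ∈ Sᶜ)).image f) g) :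
    G.IsListColoring L fun v => if h : v ∈ S then g ⟨v, h⟩ else f ⟨v, h⟩ := by
  have hout (v : S) (u : ↥Sᶜ) (h : G.Adj v u) : g v ≠ f u := fun he =>
    (mem_sdiff.mp (hg.1 v)).2 (he ▸ mem_image_of_mem f (by simpa using h))
  refine ⟨fun v => ?_, fun x y hxy => ?_⟩
  · by_cases hv : v ∈ S
    · simpa [hv] using (mem_sdiff.mp (hg.1 ⟨v, hv⟩)).1
    · simpa [hv] using hf.1 ⟨v, hv⟩
  · by_cases hx : x ∈ S <;> by_cases hy : y ∈ S <;> simp only [hx, hy, dif_pos]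
    · exact hg.2 ⟨x, hx⟩ ⟨y, hy⟩ hxy
    · exact hout ⟨x, hx⟩ ⟨y, hy⟩ hxy
    · exact (hout ⟨y, hy⟩ ⟨x, hx⟩ hxy.symm).symm
    · exact hf.2 ⟨x, hx⟩ ⟨y, hy⟩ hxy

end Extension

end SimpleGraph

/-- Let `G` be a finite simple graph and `L` a list assignment with
`|L v| ≥ 4` for all `v`.  If `S` is a set of vertices all of degree exactly `4` in `G`
whose induced subgraph `G[S]` is a cycle of even length, and the induced subgraph of `G`
on the complement of `S` has a proper `L`-coloring, then `G` has a proper `L`-coloring. -/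
theorem extend_coloring_even_cycle {V : Type*} [Fintype V]
    (G : SimpleGraph V) [DecidableRel G.Adj]
    (L : V → Finset ℕ) (hL : ∀ v, 4 ≤ (L v).card)
    (S : Set V) (hdeg : ∀ v ∈ S, G.degree v = 4)
    (m : ℕ) (hm : 2 ≤ m)
    (hcyc : Nonempty (G.induce S ≃g cycleGraph (2 * m)))
    (hcol : ∃ f : ↥(Sᶜ) → ℕ, (∀ v : ↥(Sᶜ), f v ∈ L ↑v) ∧
      ∀ x y, (G.induce Sᶜ).Adj x y → f x ≠ f y) :
    ∃ f : V → ℕ, (∀ v, f v ∈ L v) ∧ ∀ x y, G.Adj x y → f x ≠ f y := by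
  classical
  obtain ⟨φ⟩ := hcyc
  obtain ⟨f, hf⟩ : ∃ f, (G.induce Sᶜ).IsListColoring (fun v => L v) f := hcol
  have hout (v : S) : #((G.neighborFinset v).subtype (· ∈ Sᶜ)) = 2 := by
    have := card_subtype_neighborFinset_compl_add_degree_induce (G := G) v
    rw [hdeg v v.2, ← φ.degree_eq, cycleGraph_degree_eq_two (by omega)] at this
    omega
  have hL' (v : S) : 2 ≤ #(L v \ ((G.neighborFinset v).subtype (· ∈ Sᶜ)).image f) := by
    have := le_card_sdiff (((G.neighborFinset v).subtype (· ∈ Sᶜ)).image f) (L v)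
    have := (card_image_le (f := f)).trans (hout v).le
    have := hL v
    omega
  obtain ⟨g, hg⟩ := exists_isListColoring_cycleGraph_of_even (even_two_mul m)
    fun i => hL' (φ.symm i)
  exact ⟨_, hf.extend (hg.map_iso φ.symm)⟩
end

section
/- For every integer k ≥ 6 and every natural number N, there exists a finite simple graph G with at least N vertices such that G contains no subgraph isomorphic to K_5, G contains no cycle of length ℓ for any ℓ with 6 ≤ ℓ ≤ k, and the chromatic number of G is exactly 5 (in particular, G is not 4-colorable and hence not 4-choosable). -/
/-!
Take `r` blocks, each a copy of `K₅` minus an edge, glued end to end in a chain, and join the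
two ends of the chain by one extra "twist" edge. In a 4-colouring the two ends of each block get
the same colour (they both see the same triangle), so the ends of the chain do too, and the twist
edge forbids this; colouring by residues mod 4 and giving one end a fifth colour shows `χ = 5`.
Without the twist edge every junction of two blocks is a cut vertex, so cycles stay inside a block
and have length at most 5. A cycle through the twist edge must walk the chain from one end to the
other, where each step advances by at most 3 of the `4r` positions, so it is longer than `r`.
-/

open SimpleGraph

theorem Finset.exists_add_le_of_lt_card {α : Type*} {s : Finset α} {f : α → ℕ}
    (hf : Set.InjOn f s) {n : ℕ} (hn : n < s.card) : ∃ a ∈ s, ∃ b ∈ s, f a + n ≤ f b := by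
  have hs : s.Nonempty := Finset.card_pos.mp (by omega)
  obtain ⟨a, ha, hmin⟩ := s.exists_min_image f hs
  obtain ⟨b, hb, hmax⟩ := s.exists_max_image f hs
  refine ⟨a, ha, b, hb, ?_⟩
  have hsub : s.image f ⊆ Finset.Icc (f a) (f b) := fun x hx => by
    obtain ⟨y, hy, rfl⟩ := Finset.mem_image.mp hx
    exact Finset.mem_Icc.mpr ⟨hmin y hy, hmax y hy⟩
  have := Finset.card_le_card hsub
  rw [Finset.card_image_of_injOn hf, Nat.card_Icc] at this
  omega

namespace SimpleGraph

variable {V : Type*} {G H : SimpleGraph V}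

theorem Colorable.sup_edge {n : ℕ} (hH : H.Colorable n) (s t : V) :
    (H ⊔ edge s t).Colorable (n + 1) := by
  classical
  obtain ⟨C⟩ := hH
  refine ⟨Coloring.mk (fun v => if v = s then Fin.last n else (C v).castSucc) ?_⟩
  rintro u v (h | h)
  · have := C.valid h
    have := h.ne
    split_ifs <;> simp_all [Fin.castSucc_ne_last, (Fin.castSucc_ne_last _).symm]
  · rw [edge_adj] at h
    split_ifs <;> simp_all [Fin.castSucc_ne_last, (Fin.castSucc_ne_last _).symm]

theorem not_colorable_sup_edge {n : ℕ} {s t : V} (hst : s ≠ t)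
    (h : ∀ C : H.Coloring (Fin n), C s = C t) : ¬ (H ⊔ edge s t).Colorable n := by
  rintro ⟨C⟩
  apply C.valid (Or.inr ((edge_adj s t s t).mpr ⟨.inl ⟨rfl, rfl⟩, hst⟩))
  exact h (C.comp (Hom.ofLE le_sup_left))

theorem Coloring.eq_of_adj_triangle (C : G.Coloring (Fin 4)) {x a b c y : V}
    (hxa : G.Adj x a) (hxb : G.Adj x b) (hxc : G.Adj x c) (hab : G.Adj a b) (hac : G.Adj a c)
    (hbc : G.Adj b c) (hay : G.Adj a y) (hby : G.Adj b y) (hcy : G.Adj c y) : C x = C y := by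
  have key : ∀ i j k l m : Fin 4, i ≠ j → i ≠ k → i ≠ l → j ≠ k → j ≠ l → k ≠ l →
      j ≠ m → k ≠ m → l ≠ m → i = m := by decide
  exact key _ _ _ _ _ (C.valid hxa) (C.valid hxb) (C.valid hxc) (C.valid hab) (C.valid hac)
    (C.valid hbc) (C.valid hay) (C.valid hby) (C.valid hcy)

namespace Walk

variable {u v w t : V}

theorem le_add_mul_length {f : V → ℕ} {K : ℕ} (hf : ∀ x y, G.Adj x y → f y ≤ f x + K)
    (p : G.Walk u v) : f v ≤ f u + K * p.length := by
  induction p with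
  | nil => simp
  | cons h p ih =>
    have := hf _ _ h
    rw [length_cons, mul_add, mul_one]
    omega

theorem mem_support_tail_of_cut {S : Set V} (hS : ∀ x y, G.Adj x y → x ∈ S → y ∉ S → y = t)
    (p : G.Walk u v) (hu : u ∈ S) (hv : v ∉ S) : t ∈ p.support.tail := by
  obtain ⟨d, hd, hfst, hsnd⟩ := p.exists_boundary_dart S hu hv
  rw [← map_snd_darts, ← hS _ _ d.adj hfst hsnd]
  exact List.mem_map_of_mem hd

theorem IsCycle.mem_or_eq_of_cut {S : Set V}
    (hS : ∀ x y, G.Adj x y → x ∈ S → y ∉ S → y = t) {c : G.Walk u u} (hc : c.IsCycle)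
    {x y : V} (hx : x ∈ c.support) (hxS : x ∈ S) (hy : y ∈ c.support) : y ∈ S ∨ y = t := by
  classical
  by_contra! hyS
  obtain ⟨hyS, hyt⟩ := hyS
  have hy' : y ∈ (c.rotate x hx).support := (c.mem_support_rotate_iff x hx).mpr hy
  set c' := c.rotate x hx
  have hnodup : c'.support.tail.Nodup := (hc.rotate hx).support_nodup
  rw [← take_spec c' hy', tail_support_append] at hnodup
  have h₁ : t ∈ (c'.takeUntil y hy').support.tail := mem_support_tail_of_cut hS _ hxS hyS
  have h₂ : t ∈ (c'.dropUntil y hy').support.tail := by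
    have := List.mem_of_mem_tail (mem_support_tail_of_cut hS (c'.dropUntil y hy').reverse hxS hyS)
    rw [support_reverse, List.mem_reverse, ← cons_tail_support, List.mem_cons] at this
    exact this.resolve_left hyt.symm
  exact List.disjoint_of_nodup_append hnodup h₁ h₂

theorem IsTrail.exists_walk_notMem_edges {c : G.Walk u u} (hc : c.IsTrail)
    (he : s(v, w) ∈ c.edges) : ∃ p : G.Walk v w, s(v, w) ∉ p.edges ∧ p.length < c.length := by
  classical
  have hv := c.fst_mem_support_of_mem_edges he
  set c' := c.rotate v hv
  have hw : w ∈ c'.support :=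
    c'.snd_mem_support_of_mem_edges ((c.rotate_edges v hv).mem_iff.mpr he)
  have hvw : v ≠ w := (c.adj_of_mem_edges he).ne
  have htake : (c'.takeUntil w hw).length ≠ 0 := fun h => hvw (eq_of_length_eq_zero h)
  have hdrop : (c'.dropUntil w hw).length ≠ 0 := fun h => hvw (eq_of_length_eq_zero h).symm
  have hlen : (c'.takeUntil w hw).length + (c'.dropUntil w hw).length = c.length := by
    rw [← length_append, take_spec, length_rotate]
  by_cases h : s(v, w) ∈ (c'.takeUntil w hw).edges
  · refine ⟨(c'.dropUntil w hw).reverse, ?_, by rw [length_reverse]; omega⟩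
    rw [edges_reverse, List.mem_reverse]
    exact (hc.rotate hv).disjoint_edges_takeUntil_dropUntil hw h
  · exact ⟨c'.takeUntil w hw, h, by omega⟩

theorem forall_mem_edgeSet_of_sup_edge {s t : V} {p : (H ⊔ edge s t).Walk u v}
    (hp : s(s, t) ∉ p.edges) : ∀ e ∈ p.edges, e ∈ H.edgeSet := by
  intro e he
  have := p.edges_subset_edgeSet he
  rw [edgeSet_sup, edgeSet_edge] at this
  rcases this with h | ⟨rfl, -⟩
  · exact h
  · exact absurd he hp

end Walk

/-- Vertex `4j + i` (`i ≤ 4`) lies in the `j`-th block; each block induces `K₅` minus the edge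
joining its two ends `4j` and `4j + 4`, and consecutive blocks share an end. -/
def blockChain (r : ℕ) : SimpleGraph (Fin (4 * r + 1)) :=
  fromRel fun u v => ∃ j, 4 * j ≤ (u : ℕ) ∧ u < v ∧ (v : ℕ) ≤ 4 * j + 4 ∧ (v : ℕ) < u + 4

abbrev twistedChain (r : ℕ) : SimpleGraph (Fin (4 * r + 1)) :=
  blockChain r ⊔ edge 0 (Fin.last _)

namespace blockChain

variable {r : ℕ} {u v : Fin (4 * r + 1)}

theorem adj_mk {a b : ℕ} (ha : a < 4 * r + 1) (hb : b < 4 * r + 1) (j : ℕ)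
    (h : 4 * j ≤ a ∧ a < b ∧ b ≤ 4 * j + 4 ∧ b < a + 4) :
    (blockChain r).Adj ⟨a, ha⟩ ⟨b, hb⟩ :=
  fromRel_adj _ _ _ |>.mpr ⟨Fin.ne_of_lt h.2.1, .inl ⟨j, h⟩⟩

theorem val_le_add_three (h : (blockChain r).Adj u v) : (v : ℕ) ≤ u + 3 := by
  rw [blockChain, fromRel_adj] at h
  rcases h with ⟨-, ⟨j, hj⟩ | ⟨j, hj⟩⟩ <;> omega

theorem val_eq_of_adj_of_lt_of_le {b : ℕ} (h : (blockChain r).Adj u v) (hu : (u : ℕ) < 4 * b)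
    (hv : 4 * b ≤ (v : ℕ)) : (v : ℕ) = 4 * b := by
  rw [blockChain, fromRel_adj] at h
  rcases h with ⟨-, ⟨j, hj⟩ | ⟨j, hj⟩⟩ <;> simp only [Fin.lt_def] at hj <;> omega

theorem colorable_four (r : ℕ) : (blockChain r).Colorable 4 := by
  refine ⟨Coloring.mk (fun u => ⟨u % 4, Nat.mod_lt _ (by norm_num)⟩) ?_⟩
  intro u v h
  rw [blockChain, fromRel_adj] at h
  simp only [ne_eq, Fin.mk.injEq]
  rcases h with ⟨-, ⟨j, hj⟩ | ⟨j, hj⟩⟩ <;> simp only [Fin.lt_def] at hj <;> omega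

theorem coloring_block_ends (C : (blockChain r).Coloring (Fin 4)) {j : ℕ} (hj : j < r) :
    C ⟨4 * j, by omega⟩ = C ⟨4 * j + 4, by omega⟩ := by
  refine C.eq_of_adj_triangle (a := ⟨4 * j + 1, by omega⟩) (b := ⟨4 * j + 2, by omega⟩)
    (c := ⟨4 * j + 3, by omega⟩) ?_ ?_ ?_ ?_ ?_ ?_ ?_ ?_ ?_ <;> exact adj_mk _ _ j (by omega)

theorem coloring_zero_eq_last (C : (blockChain r).Coloring (Fin 4)) : C 0 = C (Fin.last _) := by
  have key : ∀ j (hj : j ≤ r), C ⟨4 * j, by omega⟩ = C 0 := by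
    intro j
    induction j with
    | zero => intro; rfl
    | succ j ih =>
      intro hj
      exact (coloring_block_ends C (j := j) (by omega)).symm.trans (ih (by omega))
  exact (key r le_rfl).symm

theorem length_le_five {c : (blockChain r).Walk u u} (hc : c.IsCycle) : c.length ≤ 5 := by
  by_contra! hlen
  have hcard : 5 < c.support.tail.toFinset.card := by
    rw [List.toFinset_card_of_nodup hc.support_nodup, List.length_tail, Walk.length_support]
    omega
  obtain ⟨x, hx, y, hy, hxy⟩ := Finset.exists_add_le_of_lt_card Fin.val_injective.injOn hcard
  rw [List.mem_toFinset] at hx hy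
  -- the junction `4b` just above `x` separates `x` from `y`
  set b := (x : ℕ) / 4 + 1 with hb
  have hb4 : 4 * b < 4 * r + 1 := by have := y.isLt; omega
  set S : Set (Fin (4 * r + 1)) := {w | (w : ℕ) < 4 * b}
  have hS : ∀ u v, (blockChain r).Adj u v → u ∈ S → v ∉ S → v = ⟨4 * b, hb4⟩ :=
    fun u v huv hu hv => Fin.ext (val_eq_of_adj_of_lt_of_le huv hu (not_lt.mp hv))
  have hxS : x ∈ S := show (x : ℕ) < 4 * b by omega
  rcases hc.mem_or_eq_of_cut hS (List.mem_of_mem_tail hx) hxS (List.mem_of_mem_tail hy) with h | h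
  · have : (y : ℕ) < 4 * b := h
    omega
  · have : (y : ℕ) = 4 * b := Fin.ext_iff.mp h
    omega

end blockChain

namespace twistedChain

variable {r : ℕ}

theorem not_colorable_four (hr : 1 ≤ r) : ¬ (twistedChain r).Colorable 4 :=
  not_colorable_sup_edge (Fin.ne_of_lt (by simp [Fin.lt_def]; omega))
    blockChain.coloring_zero_eq_last

theorem chromaticNumber_eq_five (hr : 1 ≤ r) : (twistedChain r).chromaticNumber = 5 :=
  chromaticNumber_eq_iff_colorable_not_colorable.mpr
    ⟨(blockChain.colorable_four r).sup_edge _ _, not_colorable_four hr⟩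

theorem val_le_add_three_or_eq_twist {u v : Fin (4 * r + 1)} (h : (twistedChain r).Adj u v) :
    ((u : ℕ) ≤ v + 3 ∧ (v : ℕ) ≤ u + 3) ∨ ((u : ℕ) = 0 ∧ (v : ℕ) = 4 * r) ∨
      ((u : ℕ) = 4 * r ∧ (v : ℕ) = 0) := by
  rcases h with h | h
  · exact .inl ⟨blockChain.val_le_add_three h.symm, blockChain.val_le_add_three h⟩
  · rw [edge_adj] at h
    simp only [Fin.ext_iff, Fin.val_zero, Fin.val_last] at h
    exact .inr h.1

theorem cliqueFree_five (hr : 2 ≤ r) : (twistedChain r).CliqueFree 5 := by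
  intro s hs
  obtain ⟨a, ha, b, hb, hab⟩ :=
    Finset.exists_add_le_of_lt_card (n := 4) Fin.val_injective.injOn (by rw [hs.card_eq]; norm_num)
  obtain ⟨c, hc, hcb⟩ := Finset.exists_mem_ne (s := s.erase a)
    (by rw [Finset.card_erase_of_mem ha, hs.card_eq]; norm_num) b
  obtain ⟨hca, hc⟩ := Finset.mem_erase.mp hc
  -- `a`, `b` are at least 4 apart, so `ab` is the twist edge, and `c` cannot be near both ends
  have := val_le_add_three_or_eq_twist (hs.isClique ha hb (by rintro rfl; omega))
  have := val_le_add_three_or_eq_twist (hs.isClique hc ha hca)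
  have := val_le_add_three_or_eq_twist (hs.isClique hc hb hcb)
  have := Fin.val_injective.ne hca
  have := Fin.val_injective.ne hcb
  omega

theorem length_le_five_or_lt {u : Fin (4 * r + 1)} {c : (twistedChain r).Walk u u}
    (hc : c.IsCycle) : c.length ≤ 5 ∨ r < c.length := by
  by_cases he : s(0, Fin.last _) ∈ c.edges
  · right
    obtain ⟨p, hp, hlen⟩ := hc.isTrail.exists_walk_notMem_edges he
    have := (p.transfer (blockChain r) (p.forall_mem_edgeSet_of_sup_edge hp)).le_add_mul_length
      (fun _ _ h => blockChain.val_le_add_three h)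
    simp only [Walk.length_transfer, Fin.val_last, Fin.val_zero] at this
    omega
  · left
    have := blockChain.length_le_five (hc.transfer (c.forall_mem_edgeSet_of_sup_edge he))
    simpa only [Walk.length_transfer] using this

end twistedChain

end SimpleGraph

theorem exists_no_K5_no_middle_cycles_chromatic_five_general (k : ℕ) (N : ℕ) :
    ∃ (n : ℕ) (G : SimpleGraph (Fin n)),
      N ≤ n ∧
      (¬ ∃ f : Fin 5 → Fin n, Function.Injective f ∧
        ∀ i j : Fin 5, i ≠ j → G.Adj (f i) (f j)) ∧
      (∀ ℓ : ℕ, 6 ≤ ℓ → ℓ ≤ k →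
        ∀ (v : Fin n) (w : G.Walk v v), w.IsCycle → w.length ≠ ℓ) ∧
      G.chromaticNumber = 5 ∧
      ¬ G.Colorable 4 ∧
      ¬ ∀ L : Fin n → Finset ℕ, (∀ v, 4 ≤ (L v).card) →
        ∃ f : Fin n → ℕ, (∀ v, f v ∈ L v) ∧ ∀ x y, G.Adj x y → f x ≠ f y := by
  set r := k + N + 2
  have hcol := twistedChain.not_colorable_four (r := r) (by omega)
  refine ⟨4 * r + 1, twistedChain r, by omega, ?_, ?_,
    twistedChain.chromaticNumber_eq_five (by omega), hcol, ?_⟩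
  · rintro ⟨f, hf, hadj⟩
    exact (cliqueFree_iff.mp (twistedChain.cliqueFree_five (by omega))).false
      ⟨⟨f, hadj _ _⟩, hf⟩
  · rintro ℓ h6 hℓ v c hc rfl
    have := twistedChain.length_le_five_or_lt hc
    omega
  · intro h
    obtain ⟨f, hf, hvalid⟩ := h (fun _ => Finset.range 4) (by simp)
    exact hcol ⟨Coloring.mk (fun v => ⟨f v, Finset.mem_range.mp (hf v)⟩)
      fun hadj heq => hvalid _ _ hadj (Fin.ext_iff.mp heq)⟩

/-- for every `k ≥ 6` and every `N`, there is a finite simple graph `G`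
with at least `N` vertices, containing no `K₅` subgraph and no cycle of length `ℓ` for
any `6 ≤ ℓ ≤ k`, whose chromatic number is exactly `5` (in particular `G` is not
4-colorable and hence not 4-choosable). -/
theorem exists_no_K5_no_middle_cycles_chromatic_five (k : ℕ) (hk : 6 ≤ k) (N : ℕ) :
    ∃ (n : ℕ) (G : SimpleGraph (Fin n)),
      N ≤ n ∧
      (¬ ∃ f : Fin 5 → Fin n, Function.Injective f ∧
        ∀ i j : Fin 5, i ≠ j → G.Adj (f i) (f j)) ∧
      (∀ ℓ : ℕ, 6 ≤ ℓ → ℓ ≤ k →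
        ∀ (v : Fin n) (w : G.Walk v v), w.IsCycle → w.length ≠ ℓ) ∧
      G.chromaticNumber = 5 ∧
      ¬ G.Colorable 4 ∧
      ¬ ∀ L : Fin n → Finset ℕ, (∀ v, 4 ≤ (L v).card) →
        ∃ f : Fin n → ℕ, (∀ v, f v ∈ L v) ∧ ∀ x y, G.Adj x y → f x ≠ f y :=
  exists_no_K5_no_middle_cycles_chromatic_five_general k N
end
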